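/- arXiv:2101.12525 — 2 statements merged into one kernel-verified Lean document; each statement's English description precedes it below -/
import Mathlib

section
/- Let A, X, W, Y be random variables where the score function is ψ(S; β, η) = (A - m_A(W)) (Y - m_Y(W) - (X - m_X(W))^T β) for nuisance parameter η = (m_A, m_X, m_Y). Let η⁰ = (m_A⁰, m_X⁰, m_Y⁰) where m_A⁰(W) = E[A|W], m_X⁰(W) = E[X|W], m_Y⁰(W) = E[Y|W]. Then for any β₀ and any nuisance parameter η with integrable components, the pathwise derivative d/dr E[ψ(S; β₀, η⁰ + r(η - η⁰))] evaluated at r = 0 equals 0 (Neyman orthogonality). -/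
/-!
Write the score along the path as `(a - r b) (c - r e)`, where `a = A - E[A|W]` and
`c = Y - E[Y|W] - (X - E[X|W])ᵀ β₀` are the residuals, while `b = m_A - m_A⁰` and
`e = (m_Y - m_Y⁰) - (m_X - m_X⁰)ᵀ β₀` are functions of `W`. Its expectation is a quadratic
polynomial in `r` whose linear coefficient is `-(E[a e] + E[b c])`. Each of these two terms is
the expectation of a `W`-measurable factor times a residual, so pulling the factor out of
`E[· | W]` shows that it vanishes.
-/

open MeasureTheory

section ConditionalResidual

variable {Ω E F : Type*} {m mΩ : MeasurableSpace Ω} {μ : Measure Ω}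
  [NormedAddCommGroup E] [NormedSpace ℝ E] [CompleteSpace E]
  [NormedAddCommGroup F] [NormedSpace ℝ F] [CompleteSpace F]

lemma condExp_sub_condExp_ae_eq_zero (hm : m ≤ mΩ) [SigmaFinite (μ.trim hm)] {f : Ω → E}
    (hf : Integrable f μ) : μ[f - μ[f | m] | m] =ᵐ[μ] 0 := by
  filter_upwards [condExp_sub hf integrable_condExp m,
    condExp_condExp_of_le le_rfl hm (f := f) (μ := μ)] with ω hsub hidem
  rw [hsub, Pi.sub_apply, hidem, sub_self, Pi.zero_apply]

lemma condExp_comp_sub_comp_condExp_ae_eq_zero (hm : m ≤ mΩ) [SigmaFinite (μ.trim hm)]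
    (T : E →L[ℝ] F) {f : Ω → E} (hf : Integrable f μ) :
    μ[fun ω ↦ T (f ω) - T (μ[f | m] ω) | m] =ᵐ[μ] 0 := by
  have hres : (fun ω ↦ T (f ω) - T (μ[f | m] ω)) =ᵐ[μ] (T ∘ f) - μ[T ∘ f | m] := by
    filter_upwards [T.comp_condExp_comm hf (m := m)] with ω hω
    simp only [Pi.sub_apply, Function.comp_apply, ← hω]
  exact (condExp_congr_ae hres).trans
    (condExp_sub_condExp_ae_eq_zero hm (T.integrable_comp hf))

lemma condExp_sub_ae_eq_zero {f g : Ω → E} (hf : Integrable f μ) (hg : Integrable g μ)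
    (hf0 : μ[f | m] =ᵐ[μ] 0) (hg0 : μ[g | m] =ᵐ[μ] 0) : μ[f - g | m] =ᵐ[μ] 0 := by
  filter_upwards [condExp_sub hf hg m, hf0, hg0] with ω hsub hfω hgω
  rw [hsub, Pi.sub_apply, hfω, hgω, sub_self, Pi.zero_apply]

lemma integral_mul_eq_zero_of_condExp_ae_eq_zero (hm : m ≤ mΩ) [SigmaFinite (μ.trim hm)]
    {f g : Ω → ℝ} (hf : StronglyMeasurable[m] f) (hfg : Integrable (f * g) μ)
    (hg : Integrable g μ) (hg0 : μ[g | m] =ᵐ[μ] 0) : ∫ ω, f ω * g ω ∂μ = 0 := by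
  have hpull : μ[f * g | m] =ᵐ[μ] 0 := by
    filter_upwards [condExp_mul_of_stronglyMeasurable_left hf hfg hg, hg0] with ω hω hω0
    rw [hω, Pi.mul_apply, hω0, Pi.zero_apply, mul_zero]
  calc ∫ ω, f ω * g ω ∂μ = ∫ ω, (μ[f * g | m]) ω ∂μ := (integral_condExp hm).symm
    _ = 0 := by simp [integral_congr_ae hpull]

end ConditionalResidual

section Orthogonality

variable {Ω : Type*} {m mΩ : MeasurableSpace Ω} {μ : Measure Ω}

lemma hasDerivAt_integral_sub_mul_mul_sub_mul {a b c e : Ω → ℝ}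
    (hac : Integrable (fun ω ↦ a ω * c ω) μ) (hae : Integrable (fun ω ↦ a ω * e ω) μ)
    (hbc : Integrable (fun ω ↦ b ω * c ω) μ) (hbe : Integrable (fun ω ↦ b ω * e ω) μ) :
    HasDerivAt (fun r : ℝ ↦ ∫ ω, (a ω - r * b ω) * (c ω - r * e ω) ∂μ)
      (-(∫ ω, a ω * e ω ∂μ + ∫ ω, b ω * c ω ∂μ)) 0 := by
  have hpoly : (fun r : ℝ ↦ ∫ ω, (a ω - r * b ω) * (c ω - r * e ω) ∂μ) = fun r ↦
      ∫ ω, a ω * c ω ∂μ - r * (∫ ω, a ω * e ω ∂μ + ∫ ω, b ω * c ω ∂μ)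
        + r ^ 2 * ∫ ω, b ω * e ω ∂μ := by
    funext r
    have hexpand : (fun ω ↦ (a ω - r * b ω) * (c ω - r * e ω)) = fun ω ↦
        a ω * c ω - (r * (a ω * e ω) + r * (b ω * c ω)) + r ^ 2 * (b ω * e ω) := by
      funext ω; ring
    have hcross := (hae.const_mul r).fun_add (hbc.const_mul r)
    rw [hexpand, integral_add (hac.sub' hcross) (hbe.const_mul _), integral_sub hac hcross,
      integral_add (hae.const_mul r) (hbc.const_mul r), integral_const_mul, integral_const_mul,
      integral_const_mul]
    ring
  rw [hpoly]
  have hlin := ((hasDerivAt_id (0 : ℝ)).mul_const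
    (∫ ω, a ω * e ω ∂μ + ∫ ω, b ω * c ω ∂μ)).const_sub (∫ ω, a ω * c ω ∂μ)
  have hquad := (hasDerivAt_pow 2 (0 : ℝ)).mul_const (∫ ω, b ω * e ω ∂μ)
  exact (hlin.add hquad).congr_deriv (by simp)

lemma hasDerivAt_integral_residual_mul_residual_zero [IsFiniteMeasure μ] (hm : m ≤ mΩ)
    {a b c e : Ω → ℝ} (ha : MemLp a 2 μ) (hb : MemLp b 2 μ) (hc : MemLp c 2 μ)
    (he : MemLp e 2 μ) (ha0 : μ[a | m] =ᵐ[μ] 0) (hc0 : μ[c | m] =ᵐ[μ] 0)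
    (hbm : StronglyMeasurable[m] b) (hem : StronglyMeasurable[m] e) :
    HasDerivAt (fun r : ℝ ↦ ∫ ω, (a ω - r * b ω) * (c ω - r * e ω) ∂μ) 0 0 := by
  have hea : ∫ ω, a ω * e ω ∂μ = 0 := by
    simp_rw [mul_comm (a _)]
    exact integral_mul_eq_zero_of_condExp_ae_eq_zero hm hem (he.integrable_mul ha)
      (ha.integrable one_le_two) ha0
  have hbc : ∫ ω, b ω * c ω ∂μ = 0 :=
    integral_mul_eq_zero_of_condExp_ae_eq_zero hm hbm (hb.integrable_mul hc)
      (hc.integrable one_le_two) hc0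
  simpa [hea, hbc] using hasDerivAt_integral_sub_mul_mul_sub_mul (ha.integrable_mul hc)
    (ha.integrable_mul he) (hb.integrable_mul hc) (hb.integrable_mul he)

end Orthogonality

lemma sum_sub_lineMap_mul {ι : Type*} (s : Finset ι) (x x₀ y β : ι → ℝ) (r : ℝ) :
    ∑ j ∈ s, (x j - ((1 - r) * x₀ j + r * y j)) * β j
      = (∑ j ∈ s, β j * x j - ∑ j ∈ s, β j * x₀ j)
        - r * (∑ j ∈ s, β j * y j - ∑ j ∈ s, β j * x₀ j) := by
  simp only [Finset.mul_sum, ← Finset.sum_sub_distrib]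
  exact Finset.sum_congr rfl fun j _ ↦ by ring

theorem stmt10 {Ω β : Type*} [MeasurableSpace Ω] [MeasurableSpace β]
    {μ : Measure Ω} [IsProbabilityMeasure μ] {q d : ℕ}
    {W : Ω → β} (hW : Measurable W)
    (A nA : Ω → EuclideanSpace ℝ (Fin q)) (X nX : Ω → EuclideanSpace ℝ (Fin d))
    (Y nY : Ω → ℝ)
    (hA : MemLp A 2 μ) (hX : MemLp X 2 μ) (hY : MemLp Y 2 μ)
    (hnA : MemLp nA 2 μ) (hnX : MemLp nX 2 μ) (hnY : MemLp nY 2 μ)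
    (hmA : StronglyMeasurable[MeasurableSpace.comap W inferInstance] nA)
    (hmX : StronglyMeasurable[MeasurableSpace.comap W inferInstance] nX)
    (hmY : StronglyMeasurable[MeasurableSpace.comap W inferInstance] nY)
    (β₀ : Fin d → ℝ)
    (mA0 : Ω → EuclideanSpace ℝ (Fin q))
    (hmA0 : mA0 = μ[A | MeasurableSpace.comap W inferInstance])
    (mX0 : Ω → EuclideanSpace ℝ (Fin d))
    (hmX0 : mX0 = μ[X | MeasurableSpace.comap W inferInstance])
    (mY0 : Ω → ℝ)
    (hmY0 : mY0 = μ[Y | MeasurableSpace.comap W inferInstance]) :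
    HasDerivAt
      (fun r : ℝ => fun i : Fin q =>
        ∫ ω, (A ω i - ((1 - r) * mA0 ω i + r * nA ω i))
          * (Y ω - ((1 - r) * mY0 ω + r * nY ω)
            - ∑ j, (X ω j - ((1 - r) * mX0 ω j + r * nX ω j)) * β₀ j) ∂μ)
      (0 : Fin q → ℝ) (0 : ℝ) := by
  have hm := hW.comap_le
  set m := MeasurableSpace.comap W inferInstance
  subst hmA0 hmX0 hmY0
  have hA' := hA.condExp one_le_two (m := m)
  have hX' := hX.condExp one_le_two (m := m)
  have hY' := hY.condExp one_le_two (m := m)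
  let T : EuclideanSpace ℝ (Fin d) →L[ℝ] ℝ := ∑ j, β₀ j • EuclideanSpace.proj j
  have hc : MemLp (fun ω ↦ (Y ω - μ[Y | m] ω) - (T (X ω) - T (μ[X | m] ω))) 2 μ :=
    (hY.sub hY').sub ((T.comp_memLp' hX).sub (T.comp_memLp' hX'))
  have hc0 : μ[fun ω ↦ (Y ω - μ[Y | m] ω) - (T (X ω) - T (μ[X | m] ω)) | m] =ᵐ[μ] 0 :=
    condExp_sub_ae_eq_zero ((hY.sub hY').integrable one_le_two)
      (((T.comp_memLp' hX).sub (T.comp_memLp' hX')).integrable one_le_two)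
      (condExp_sub_condExp_ae_eq_zero hm (hY.integrable one_le_two))
      (condExp_comp_sub_comp_condExp_ae_eq_zero hm T (hX.integrable one_le_two))
  refine hasDerivAt_pi.2 fun i ↦ ?_
  let P : EuclideanSpace ℝ (Fin q) →L[ℝ] ℝ := EuclideanSpace.proj i
  refine (hasDerivAt_integral_residual_mul_residual_zero hm
    ((P.comp_memLp' hA).sub (P.comp_memLp' hA')) ((P.comp_memLp' hnA).sub (P.comp_memLp' hA'))
    hc ((hnY.sub hY').sub ((T.comp_memLp' hnX).sub (T.comp_memLp' hX')))
    (condExp_comp_sub_comp_condExp_ae_eq_zero hm P (hA.integrable one_le_two)) hc0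
    ((P.continuous.comp_stronglyMeasurable hmA).sub
      (P.continuous.comp_stronglyMeasurable stronglyMeasurable_condExp))
    ((hmY.sub stronglyMeasurable_condExp).sub ((T.continuous.comp_stronglyMeasurable hmX).sub
      (T.continuous.comp_stronglyMeasurable stronglyMeasurable_condExp)))).congr_of_eventuallyEq
    (.of_forall fun r ↦ integral_congr_ae (.of_forall fun ω ↦ ?_))
  simp [P, T, sum_sub_lineMap_mul]
  ring
end

section
/- Let H, A, ε_W be independent standard normal random variables and W = A + H + ε_W. Then E[A · E[H | W]] = 1/3. In particular, even though A and H are independent, E[A·H - A·E[H|W]] = -1/3 ≠ 0. -/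
/-!
Since `H`, `A`, `ε` are i.i.d., the pairs `(H, W)`, `(A, W)`, `(ε, W)` have the same joint law, so
the three conditional expectations given `W` agree; they add up to `E[W | W] = W`, hence
`E[H | W] = W / 3`. Then `E[A · W / 3] = E[A²] / 3 = 1 / 3`, because `A` is centred and independent
of `H + ε`, while `E[A H] = E[A] E[H] = 0`.
-/

open MeasureTheory
open scoped NNReal

namespace ProbabilityTheory

variable {Ω : Type*} {mΩ : MeasurableSpace Ω} {μ : Measure Ω}

theorem condExp_comap_ae_eq_of_identDistrib {β E : Type*} [MeasurableSpace β]
    [NormedAddCommGroup E] [NormedSpace ℝ E] [CompleteSpace E] [MeasurableSpace E] [BorelSpace E]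
    [SecondCountableTopology E] [IsFiniteMeasure μ] {X X' : Ω → E} {W : Ω → β}
    (hW : Measurable W) (h : IdentDistrib (fun ω => (X ω, W ω)) (fun ω => (X' ω, W ω)) μ μ)
    (hX : Integrable X μ) :
    μ[X | MeasurableSpace.comap W inferInstance]
      =ᵐ[μ] μ[X' | MeasurableSpace.comap W inferInstance] := by
  have hm := hW.comap_le
  have hX' : Integrable X' μ := (h.comp measurable_fst).integrable_iff.mp hX
  have hlaw : ∀ Y : Ω → E, AEMeasurable (fun ω => (Y ω, W ω)) μ → ∀ t : Set β,
      MeasurableSet t → ∫ ω in W ⁻¹' t, Y ω ∂μ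
        = ∫ p in Set.univ ×ˢ t, p.1 ∂μ.map (fun ω => (Y ω, W ω)) := by
    intro Y hY t ht
    rw [setIntegral_map (MeasurableSet.univ.prod ht) measurable_fst.aestronglyMeasurable hY,
      Set.mk_preimage_prod, Set.preimage_univ, Set.univ_inter]
  refine ae_eq_condExp_of_forall_setIntegral_eq hm hX'
    (fun s _ _ => integrable_condExp.integrableOn) ?_ stronglyMeasurable_condExp.aestronglyMeasurable
  rintro _ ⟨t, ht, rfl⟩ _
  rw [setIntegral_condExp hm hX ⟨t, ht, rfl⟩, hlaw X h.aemeasurable_fst t ht,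
    hlaw X' h.aemeasurable_snd t ht, h.map_eq]

section IID

variable {ι : Type*} [Fintype ι] {X : ι → Ω → ℝ}

theorem iIndepFun.identDistrib_prodMk_sum (hind : iIndepFun X μ)
    (hid : ∀ i j, IdentDistrib (X i) (X j) μ μ) (i j : ι) :
    IdentDistrib (fun ω => (X i ω, ∑ k, X k ω)) (fun ω => (X j ω, ∑ k, X k ω)) μ μ := by
  classical
  -- Swapping `i` and `j` leaves the law of the i.i.d. family and the sum unchanged.
  let σ := Equiv.swap i j
  have hpi : IdentDistrib (fun ω k => X k ω) (fun ω k => X (σ k) ω) μ μ :=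
    .pi (fun k => hid k (σ k)) hind (hind.precomp σ.injective)
  have hproj : Measurable fun v : ι → ℝ => (v i, ∑ k, v k) := by fun_prop
  convert hpi.comp hproj using 1
  · rfl
  · funext ω
    simp only [Function.comp_apply, σ, Equiv.swap_apply_left, Equiv.sum_comp σ (X · ω)]

theorem condExp_comap_sum_ae_eq_div_card (hX : ∀ i, Measurable (X i)) (hind : iIndepFun X μ)
    (hid : ∀ i j, IdentDistrib (X i) (X j) μ μ) (hint : ∀ i, Integrable (X i) μ) (i : ι) :
    μ[X i | MeasurableSpace.comap (fun ω => ∑ k, X k ω) inferInstance]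
      =ᵐ[μ] fun ω => (∑ k, X k ω) / Fintype.card ι := by
  have := hind.isProbabilityMeasure
  set S : Ω → ℝ := fun ω => ∑ k, X k ω with hS_def
  have hS : Measurable S := by fun_prop
  have hS_sum : S = ∑ k, X k := by ext ω; simp [hS_def]
  have hsame : ∀ᵐ ω ∂μ, ∀ k, μ[X k | _] ω = μ[X i | MeasurableSpace.comap S inferInstance] ω :=
    ae_all_iff.mpr fun k =>
      condExp_comap_ae_eq_of_identDistrib hS (hind.identDistrib_prodMk_sum hid k i) (hint k)
  have hself : μ[S | MeasurableSpace.comap S inferInstance] = S :=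
    condExp_of_stronglyMeasurable hS.comap_le (comap_measurable S).stronglyMeasurable
      (integrable_finsetSum _ fun k _ => hint k)
  have hsplit := condExp_finsetSum (s := Finset.univ) (fun k _ => hint k)
    (MeasurableSpace.comap S inferInstance)
  rw [← hS_sum, hself] at hsplit
  filter_upwards [hsplit, hsame] with ω hω hωk
  have : Nonempty ι := ⟨i⟩
  rw [eq_div_iff (Nat.cast_ne_zero.mpr Fintype.card_ne_zero)]
  change _ = S ω
  simp [hω, hωk, mul_comm]

end IID

theorem memLp_of_hasLaw_gaussianReal {X : Ω → ℝ} {m : ℝ} {v : ℝ≥0}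
    (hX : HasLaw X (gaussianReal m v) μ) (p : ℝ≥0) : MemLp X p μ :=
  (memLp_map_measure_iff aestronglyMeasurable_id hX.aemeasurable).mp
    (hX.map_eq ▸ memLp_id_gaussianReal p)

theorem integral_mul_add_of_hasLaw_gaussianReal [IsProbabilityMeasure μ] {X Y : Ω → ℝ}
    {v : ℝ≥0} (hX : HasLaw X (gaussianReal 0 v) μ) (hXY : IndepFun X Y μ)
    (hY : Integrable Y μ) :
    ∫ ω, X ω * (X ω + Y ω) ∂μ = v := by
  have hX2 := memLp_of_hasLaw_gaussianReal hX 2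
  have hX0 : ∫ ω, X ω ∂μ = 0 := by rw [hX.integral_eq, integral_id_gaussianReal]
  have hXX : Integrable (fun ω => X ω * X ω) μ := by simpa only [sq] using hX2.integrable_sq
  have hXY' : Integrable (fun ω => X ω * Y ω) μ :=
    hXY.integrable_mul (hX2.integrable one_le_two) hY
  simp only [mul_add]
  rw [integral_add hXX hXY', hXY.integral_fun_mul_eq_mul_integral
      hX.aemeasurable.aestronglyMeasurable hY.aestronglyMeasurable, hX0, zero_mul, add_zero]
  simp only [← sq]
  rw [← variance_of_integral_eq_zero hX.aemeasurable hX0, hX.variance_eq, variance_id_gaussianReal]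

end ProbabilityTheory

open ProbabilityTheory

theorem stmt13 {Ω : Type*} [MeasurableSpace Ω]
    {μ : Measure Ω} [IsProbabilityMeasure μ]
    (H A e : Ω → ℝ) (hH : Measurable H) (hA : Measurable A) (he : Measurable e)
    (hindep : iIndepFun ![H, A, e] μ)
    (hHlaw : μ.map H = gaussianReal 0 1)
    (hAlaw : μ.map A = gaussianReal 0 1)
    (helaw : μ.map e = gaussianReal 0 1) :
    (∫ ω, A ω *
        (μ[H | MeasurableSpace.comap (fun ω' => A ω' + H ω' + e ω') inferInstance]) ω ∂μ
      = 1 / 3)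
    ∧
    (∫ ω, (A ω * H ω - A ω *
        (μ[H | MeasurableSpace.comap (fun ω' => A ω' + H ω' + e ω') inferInstance]) ω) ∂μ
      = -(1 / 3)) := by
  have hX : ∀ i, Measurable (![H, A, e] i) := fun i => by fin_cases i <;> assumption
  have hlaw : ∀ i, HasLaw (![H, A, e] i) (gaussianReal 0 1) μ := fun i => by
    fin_cases i
    exacts [⟨hH.aemeasurable, hHlaw⟩, ⟨hA.aemeasurable, hAlaw⟩, ⟨he.aemeasurable, helaw⟩]
  have hint : ∀ i, Integrable (![H, A, e] i) μ := fun i =>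
    memLp_one_iff_integrable.mp (memLp_of_hasLaw_gaussianReal (hlaw i) 1)
  have hcond : μ[H | MeasurableSpace.comap (fun ω => A ω + H ω + e ω) inferInstance]
      =ᵐ[μ] fun ω => (A ω + H ω + e ω) / 3 := by
    have hsum : ∀ ω, ∑ k, ![H, A, e] k ω = A ω + H ω + e ω := fun ω => by
      simp only [Fin.sum_univ_three, Matrix.cons_val]
      ring
    simpa only [hsum, Matrix.cons_val_zero, Fintype.card_fin, Nat.succ_eq_add_one, Nat.reduceAdd,
      Nat.cast_ofNat] using condExp_comap_sum_ae_eq_div_card hX hindep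
        (fun i j => (hlaw i).identDistrib (hlaw j)) hint 0
  have hAlaw' : HasLaw A (gaussianReal 0 1) μ := hlaw 1
  have hAH : IndepFun A H μ := hindep.indepFun (i := 1) (j := 0) (by decide)
  have hA_He : IndepFun A (H + e) μ := hindep.indepFun_add_right hX 1 0 2 (by decide) (by decide)
  have hmain : ∫ ω, A ω *
      (μ[H | MeasurableSpace.comap (fun ω => A ω + H ω + e ω) inferInstance]) ω ∂μ = 1 / 3 := by
    rw [integral_congr_ae (g := fun ω => A ω * (A ω + (H + e) ω) / 3)
        (hcond.mono fun ω hω => by simp only [hω, Pi.add_apply]; ring),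
      integral_div, integral_mul_add_of_hasLaw_gaussianReal hAlaw' hA_He ((hint 0).add (hint 2))]
    norm_num
  have hAH_int : Integrable (fun ω => A ω * H ω) μ := hAH.integrable_mul (hint 1) (hint 0)
  refine ⟨hmain, ?_⟩
  -- `A · E[H | W]` is integrable because its integral is nonzero.
  rw [integral_sub hAH_int (.of_integral_ne_zero (by rw [hmain]; norm_num)), hmain,
    hAH.integral_fun_mul_eq_mul_integral hA.aestronglyMeasurable hH.aestronglyMeasurable,
    hAlaw'.integral_eq, integral_id_gaussianReal]
  norm_num
end
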